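/- arXiv:2408.10626 — 2 statements merged into one kernel-verified Lean document; each statement's English description precedes it below -/
import Mathlib

section
/- Let λ be an ℓ-partition and t ∈ ℤ^ℓ a multicharge, and suppose (μ; u) lies in the Ŵ_ℓ-orbit of (λ; t). Then wt_e(μ; u) = min{wt_e(ν; w) : (ν; w) in the Ŵ_ℓ-orbit of (λ; t)} (this minimum exists, the weights being nonnegative integers) if and only if u ∈ Ā_e^ℓ. -/
/-- A β-set: a subset of ℤ having a maximum element, whose complement has a minimum element. -/
def IsBetaSet (B : Set ℤ) : Prop :=
  (∃ m ∈ B, ∀ x ∈ B, x ≤ m) ∧ (∃ m, m ∉ B ∧ ∀ x, x ∉ B → m ≤ x)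

/-- The charge s(B) = |B ∩ ℤ≥0| − |ℤ<0 ∖ B| of a β-set. -/
noncomputable def charge (B : Set ℤ) : ℤ :=
  ((B ∩ {x : ℤ | 0 ≤ x}).ncard : ℤ) - (({x : ℤ | x < 0} \ B).ncard : ℤ)

/-- B^{+k} = {x + k : x ∈ B}. -/
def shiftSet (B : Set ℤ) (k : ℤ) : Set ℤ := (fun x => x + k) '' B

/-- δ_i(B) for i ∈ ℤ/eℤ. -/
noncomputable def deltaOf (e : ℕ) (i : ZMod e) (B : Set ℤ) : ℤ :=
  ({x : ℤ | x ∈ B ∧ (x : ZMod e) = i ∧ x - 1 ∉ B}.ncard : ℤ)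
    - ({x : ℤ | x ∈ B ∧ (x : ZMod e) = i - 1 ∧ x + 1 ∉ B}.ncard : ℤ)

/-- The i-th component B_i = {a : ae + i ∈ B} of the e-quotient of B. -/
def quotComp (e : ℕ) (B : Set ℤ) (i : ℕ) : Set ℤ :=
  {a : ℤ | a * (e : ℤ) + (i : ℤ) ∈ B}

/-- The e-core of B: ⋃_{i<e} {ae + i : a < s(B_i)}. -/
noncomputable def coreSet (e : ℕ) (B : Set ℤ) : Set ℤ :=
  {x : ℤ | ∃ i < e, ∃ a : ℤ, a < charge (quotComp e B i) ∧ x = a * (e : ℤ) + (i : ℤ)}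

/-- The e-weight of B: for each quotient component C = B_i, the a-th term
b_{ia} − s(C) + a equals the number of y ∉ C below the a-th bead b_{ia}, so the inner sum
counts the pairs (x, y) with x ∈ C, y ∉ C, y < x. -/
noncomputable def wtSet (e : ℕ) (B : Set ℤ) : ℕ :=
  ∑ i ∈ Finset.range e,
    {p : ℤ × ℤ | p.1 ∈ quotComp e B i ∧ p.2 ∉ quotComp e B i ∧ p.2 < p.1}.ncard

/-- υ_j(ae + b) = aeℓ + (ℓ−j)e + b. -/
def upsilon (e ℓ j : ℕ) (x : ℤ) : ℤ :=
  (x - x % (e : ℤ)) * (ℓ : ℤ) + ((ℓ : ℤ) - (j : ℤ)) * (e : ℤ) + x % (e : ℤ)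

/-- The Uglov map U(B^{(1)}, …, B^{(ℓ)}) = ⋃_j υ_j(B^{(j)}) (the j-th component of the
tuple, indexed by Fin ℓ, is B^{(j+1)} of the paper). -/
def uglovU (e ℓ : ℕ) (B : Fin ℓ → Set ℤ) : Set ℤ :=
  ⋃ j : Fin ℓ, upsilon e ℓ (j.1 + 1) '' (B j)

/-- A partition, as a weakly decreasing eventually-zero function ℕ → ℕ
(the value at a being λ_{a+1}). -/
def IsPartitionFun (p : ℕ → ℕ) : Prop :=
  (∀ a b : ℕ, a ≤ b → p b ≤ p a) ∧ ∃ N, ∀ n, N ≤ n → p n = 0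

/-- β_t(λ) = {λ_a + t − a : a ≥ 1}. -/
def betaOf (p : ℕ → ℕ) (t : ℤ) : Set ℤ :=
  {x : ℤ | ∃ a : ℕ, x = (p a : ℤ) + t - ((a : ℤ) + 1)}

-- β⁻¹(B): the unique partition λ with β_{s(B)}(λ) = B (junk value if none exists).
open Classical in
noncomputable def betaInv (B : Set ℤ) : ℕ → ℕ :=
  if h : ∃ p : ℕ → ℕ, IsPartitionFun p ∧ betaOf p (charge B) = B then h.choose
  else fun _ => 0

/-- U(β_t(λ)) for an ℓ-partition λ and multicharge t. -/
def uglovMulti (e ℓ : ℕ) (Λ : Fin ℓ → ℕ → ℕ) (t : Fin ℓ → ℤ) : Set ℤ :=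
  uglovU e ℓ (fun j => betaOf (Λ j) (t j))

/-- U(λ; t) = β⁻¹(U(β_t(λ))). -/
noncomputable def uglovPart (e ℓ : ℕ) (Λ : Fin ℓ → ℕ → ℕ) (t : Fin ℓ → ℤ) : ℕ → ℕ :=
  betaInv (uglovMulti e ℓ Λ t)

/-- core_e(λ; t) = β⁻¹(core_e(U(β_t(λ)))). -/
noncomputable def corePart (e ℓ : ℕ) (Λ : Fin ℓ → ℕ → ℕ) (t : Fin ℓ → ℤ) : ℕ → ℕ :=
  betaInv (coreSet e (uglovMulti e ℓ Λ t))

/-- wt_e(λ; t) = wt_e(U(β_t(λ))). -/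
noncomputable def wtPart (e ℓ : ℕ) (Λ : Fin ℓ → ℕ → ℕ) (t : Fin ℓ → ℤ) : ℕ :=
  wtSet e (uglovMulti e ℓ Λ t)

/-- t ∈ Ā_e^ℓ : t is weakly increasing with last entry at most first entry + e. -/
def memAbar (e : ℕ) {ℓ : ℕ} (t : Fin ℓ → ℤ) : Prop :=
  Monotone t ∧ ∀ i j : Fin ℓ, t j ≤ t i + (e : ℤ)

/-- t ∈ A_e^ℓ : t is weakly increasing with last entry at most first entry + e − 1. -/
def memA (e : ℕ) {ℓ : ℕ} (t : Fin ℓ → ℤ) : Prop :=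
  Monotone t ∧ ∀ i j : Fin ℓ, t j ≤ t i + (e : ℤ) - 1

/-- δ_i^t(λ) = Σ_j δ_i(β_{t_j}(λ^{(j)})). -/
noncomputable def deltaMulti (e ℓ : ℕ) (Λ : Fin ℓ → ℕ → ℕ) (t : Fin ℓ → ℤ) (i : ZMod e) : ℤ :=
  ∑ j : Fin ℓ, deltaOf e i (betaOf (Λ j) (t j))

/-- The Young diagram [λ] of an ℓ-partition, as a set of nodes (a, b, j). -/
def youngSet (ℓ : ℕ) (Λ : Fin ℓ → ℕ → ℕ) : Set (ℕ × ℕ × Fin ℓ) :=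
  {x | 1 ≤ x.1 ∧ 1 ≤ x.2.1 ∧ x.2.1 ≤ Λ x.2.2 (x.1 - 1)}

/-- The multiplicity of i ∈ ℤ/eℤ in the residue multiset res_e^t(λ). -/
noncomputable def resCount (e ℓ : ℕ) (Λ : Fin ℓ → ℕ → ℕ) (t : Fin ℓ → ℤ) (i : ZMod e) : ℕ :=
  {x : ℕ × ℕ × Fin ℓ | x ∈ youngSet ℓ Λ ∧
    (((x.2.1 : ℤ) - (x.1 : ℤ) + t x.2.2 : ℤ) : ZMod e) = i}.ncard

/-- The set of e-weights over the Ŵ_ℓ-orbit of (λ; t). -/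
noncomputable def orbitWeights (e ℓ : ℕ) (Λ : Fin ℓ → ℕ → ℕ) (t : Fin ℓ → ℤ) : Set ℕ :=
  {n : ℕ | ∃ σ : Equiv.Perm (Fin ℓ), ∃ v : Fin ℓ → ℤ,
    n = wtPart e ℓ (fun j => Λ (σ j)) (fun j => t (σ j) + (e : ℤ) * v j)}

/-!
`wt_e(B)` counts the pairs (bead `x ∈ B`, gap `y ∉ B`) with `y ≡ x [ZMOD e]` and `y < x`. For
`B = U(β_s(λ))` both ends of such a pair come from components of `β_s(λ)`, and sorting the pairs
by these components gives `2 wt_e(λ; s) = C(λ; s) + Σ_{k<j} excess e (s_j - s_k)`. The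
contribution of two components to `C` is symmetric in them and unchanged when either charge moves
by `e`, so `C` is constant on the Ŵ_ℓ-orbit. As `excess e d ≥ 0`, with equality exactly for
`0 ≤ d ≤ e`, the weight is minimal exactly on `Ā_e^ℓ`, and the orbit meets `Ā_e^ℓ` (sort the
residues of `t` mod `e`).
-/

namespace UglovWeight

open Finset (Iio)

lemma ncard_iUnion_image_eq_sum {ι α β : Type*} [Fintype ι] {f : ι → α → β} {A : ι → Set α}
    (hf : ∀ i j, ∀ a ∈ A i, ∀ b ∈ A j, f i a = f j b → i = j ∧ a = b)
    (hfin : (⋃ i, f i '' A i).Finite) :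
    (⋃ i, f i '' A i).ncard = ∑ i, (A i).ncard := by
  rw [Set.ncard_iUnion_of_finite (fun i => hfin.subset (Set.subset_iUnion _ i)),
    finsum_eq_sum_of_fintype]
  · exact Finset.sum_congr rfl fun i _ =>
      Set.InjOn.ncard_image fun a ha b hb h => (hf i i a ha b hb h).2
  · intro i j hij
    rw [Function.onFun, Set.disjoint_left]
    rintro _ ⟨a, ha, rfl⟩ ⟨b, hb, hba⟩
    exact hij (hf j i b hb a ha hba).1.symm

lemma ncard_diff_sub_ncard_diff {α : Type*} {X Y W : Set α} (hX : (X ∩ W).Finite)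
    (hY : (Y ∩ W).Finite) (hXY : X \ Y ⊆ W) (hYX : Y \ X ⊆ W) :
    ((X \ Y).ncard : ℤ) - (Y \ X).ncard = (X ∩ W).ncard - (Y ∩ W).ncard := by
  have h₁ : X \ Y = (X ∩ W) \ (Y ∩ W) := by
    ext x; have := @hXY x; simp only [Set.mem_sdiff, Set.mem_inter_iff] at *; tauto
  have h₂ : Y \ X = (Y ∩ W) \ (X ∩ W) := by
    ext x; have := @hYX x; simp only [Set.mem_sdiff, Set.mem_inter_iff] at *; tauto
  have hX' := Set.ncard_inter_add_ncard_sdiff_eq_ncard (X ∩ W) (Y ∩ W) hX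
  have hY' := Set.ncard_inter_add_ncard_sdiff_eq_ncard (Y ∩ W) (X ∩ W) hY
  rw [Set.inter_comm (Y ∩ W)] at hY'
  rw [h₁, h₂]
  omega

section BetaSet

variable {p q : ℕ → ℕ}

lemma mem_betaOf_add {t c x : ℤ} : x ∈ betaOf p (t + c) ↔ x - c ∈ betaOf p t := by
  simp only [betaOf, Set.mem_ofPred_eq]
  constructor <;> rintro ⟨a, ha⟩ <;> exact ⟨a, by omega⟩

lemma le_of_mem_betaOf (hp : IsPartitionFun p) {t x : ℤ} (hx : x ∈ betaOf p t) :
    x ≤ p 0 + t - 1 := by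
  obtain ⟨a, rfl⟩ := hx
  have := hp.1 0 a a.zero_le
  omega

lemma mem_betaOf_of_lt {N : ℕ} (hN : ∀ n, N ≤ n → p n = 0) {t x : ℤ} (hx : x < t - N) :
    x ∈ betaOf p t :=
  ⟨(t - 1 - x).toNat, by rw [hN _ (by omega)]; omega⟩

lemma betaOf_inter_Ici {N : ℕ} (hN : ∀ n, N ≤ n → p n = 0)
    {m t : ℤ} (hm : m + N ≤ t) :
    betaOf p t ∩ Set.Ici m = (fun a : ℕ => (p a : ℤ) + t - (a + 1)) '' Set.Iio (t - m).toNat := by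
  ext x
  simp only [betaOf, Set.mem_inter_iff, Set.mem_ofPred_eq, Set.mem_Ici, Set.mem_image,
    Set.mem_Iio]
  constructor
  · rintro ⟨⟨a, rfl⟩, hx⟩
    refine ⟨a, ?_, rfl⟩
    by_contra! ha
    rw [hN a (by omega)] at hx
    omega
  · rintro ⟨a, ha, rfl⟩
    exact ⟨⟨a, rfl⟩, by omega⟩

lemma ncard_betaOf_diff_sub (hp : IsPartitionFun p) (hq : IsPartitionFun q) (a b : ℤ) :
    ((betaOf p a \ betaOf q b).ncard : ℤ) - (betaOf q b \ betaOf p a).ncard = a - b := by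
  obtain ⟨Np, hNp⟩ := hp.2
  obtain ⟨Nq, hNq⟩ := hq.2
  set m := min (a - Np) (b - Nq)
  have hinj : ∀ {r : ℕ → ℕ} (t : ℤ), IsPartitionFun r →
      Function.Injective (fun a : ℕ => (r a : ℤ) + t - (a + 1)) := fun t hr =>
    StrictAnti.injective fun a b hab => by have := hr.1 a b hab.le; omega
  rw [ncard_diff_sub_ncard_diff (W := Set.Ici m), betaOf_inter_Ici hNp (by omega),
      betaOf_inter_Ici hNq (by omega), Set.ncard_image_of_injective _ (hinj a hp),
      Set.ncard_image_of_injective _ (hinj b hq)]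
  · simp only [Set.ncard_Iio_nat]; omega
  · rw [betaOf_inter_Ici hNp (by omega)]; exact (Set.finite_Iio _).image _
  · rw [betaOf_inter_Ici hNq (by omega)]; exact (Set.finite_Iio _).image _
  · rintro x ⟨-, hx⟩
    by_contra! h
    exact hx (mem_betaOf_of_lt hNq (by simp only [Set.mem_Ici, not_le] at h; omega))
  · rintro x ⟨-, hx⟩
    by_contra! h
    exact hx (mem_betaOf_of_lt hNp (by simp only [Set.mem_Ici, not_le] at h; omega))

end BetaSet

def crossPairs (e : ℕ) (X Y : Set ℤ) (m : ℤ) : Set (ℤ × ℤ) :=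
  {z | z.1 ∈ X ∧ z.2 ∉ Y ∧ (e : ℤ) ∣ z.1 - z.2 ∧ z.2 + e * m ≤ z.1}

section CrossPairs

variable {e : ℕ} {p q : ℕ → ℕ}

lemma crossPairs_betaOf_finite (hp : IsPartitionFun p) (hq : IsPartitionFun q) (a b m : ℤ) :
    (crossPairs e (betaOf p a) (betaOf q b) m).Finite := by
  obtain ⟨N, hN⟩ := hq.2
  refine ((Set.finite_Icc (b - N + e * m) (p 0 + a - 1)).prod
    (Set.finite_Icc (b - N) (p 0 + a - 1 - e * m))).subset ?_
  rintro ⟨x, y⟩ ⟨hx, hy, -, hyx⟩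
  have hx' := le_of_mem_betaOf hp hx
  have hy' : b - N ≤ y := by
    by_contra! h
    exact hy (mem_betaOf_of_lt hN h)
  simp only [Set.mem_prod, Set.mem_Icc]
  omega

lemma ncard_crossPairs_betaOf_shift {a b a' b' : ℤ} (n m : ℤ) (h : a' - a - (b' - b) = e * n) :
    (crossPairs e (betaOf p a') (betaOf q b') m).ncard =
      (crossPairs e (betaOf p a) (betaOf q b) (m - n)).ncard := by
  obtain ⟨c, rfl⟩ : ∃ c, a' = a + c := ⟨a' - a, by ring⟩
  obtain ⟨d, rfl⟩ : ∃ d, b' = b + d := ⟨b' - b, by ring⟩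
  replace h : c = d + e * n := by linarith
  have himage : crossPairs e (betaOf p (a + c)) (betaOf q (b + d)) m =
      (fun z : ℤ × ℤ => (z.1 + c, z.2 + d)) '' crossPairs e (betaOf p a) (betaOf q b) (m - n) := by
    ext ⟨x, y⟩
    simp only [crossPairs, Set.mem_image, Set.mem_ofPred_eq, Prod.mk.injEq, mem_betaOf_add]
    constructor
    · rintro ⟨hx, hy, hxy, hle⟩
      refine ⟨(x - c, y - d), ⟨hx, hy, ?_, ?_⟩, by ring, by ring⟩
      · have : x - c - (y - d) = x - y - e * n := by rw [h]; ring
        rw [this]; exact dvd_sub hxy (dvd_mul_right _ _)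
      · rw [h]; linarith
    · rintro ⟨⟨x', y'⟩, ⟨hx, hy, hxy, hle⟩, rfl, rfl⟩
      refine ⟨by simpa using hx, by simpa using hy, ?_, ?_⟩
      · have : x' + c - (y' + d) = x' - y' + e * n := by rw [h]; ring
        rw [this]; exact dvd_add hxy (dvd_mul_right _ _)
      · rw [h]; linarith
  rw [himage, Set.ncard_image_of_injective]
  intro z w hzw
  simp only [Prod.mk.injEq] at hzw
  exact Prod.ext (by linarith) (by linarith)

lemma crossPairs_betaOf_eq_union (he : 0 < e) (a b m : ℤ) :
    crossPairs e (betaOf p a) (betaOf q b) m =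
      crossPairs e (betaOf p a) (betaOf q b) (m + 1) ∪
        (fun x => (x, x - e * m)) '' (betaOf p a \ betaOf q (b + e * m)) := by
  ext ⟨x, y⟩
  simp only [crossPairs, Set.mem_union, Set.mem_image, Set.mem_ofPred_eq, Set.mem_sdiff,
    Prod.mk.injEq, mem_betaOf_add]
  constructor
  · rintro ⟨hx, hy, ⟨k, hk⟩, hle⟩
    by_cases hlt : y + e * (m + 1) ≤ x
    · exact Or.inl ⟨hx, hy, ⟨k, hk⟩, hlt⟩
    · have hkm : k = m := by
        have h₁ : (e : ℤ) * m ≤ e * k := by linarith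
        have h₂ : (e : ℤ) * k < e * (m + 1) := by linarith
        have := le_of_mul_le_mul_left h₁ (by positivity)
        have := lt_of_mul_lt_mul_left h₂ (by positivity)
        omega
      subst hkm
      exact Or.inr ⟨x, ⟨hx, by rwa [show x - e * k = y by linarith]⟩, rfl, by linarith⟩
  · rintro (⟨hx, hy, hxy, hle⟩ | ⟨x, ⟨hx, hy⟩, rfl, rfl⟩)
    · exact ⟨hx, hy, hxy, by nlinarith⟩
    · exact ⟨hx, hy, ⟨m, by ring⟩, by linarith⟩

lemma ncard_crossPairs_betaOf_succ (he : 0 < e) (hp : IsPartitionFun p) (hq : IsPartitionFun q)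
    (a b m : ℤ) :
    (crossPairs e (betaOf p a) (betaOf q b) m).ncard =
      (crossPairs e (betaOf p a) (betaOf q b) (m + 1)).ncard +
        (betaOf p a \ betaOf q (b + e * m)).ncard := by
  have hdisj : Disjoint (crossPairs e (betaOf p a) (betaOf q b) (m + 1))
      ((fun x => (x, x - e * m)) '' (betaOf p a \ betaOf q (b + e * m))) := by
    rw [Set.disjoint_left]
    rintro _ ⟨-, -, -, hle⟩ ⟨x, -, rfl⟩
    simp only at hle
    have : (0 : ℤ) < e := by positivity
    linarith
  have hfin := crossPairs_betaOf_finite (e := e) hp hq a b m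
  rw [crossPairs_betaOf_eq_union he] at hfin ⊢
  rw [Set.ncard_union_eq hdisj (hfin.subset Set.subset_union_left)
      (hfin.subset Set.subset_union_right),
    Set.ncard_image_of_injective _ fun x y h => (Prod.mk.inj h).1]

end CrossPairs

/-- `excess e d = 2 wt_e((∅, ∅); (0, d))`. -/
def excess (e : ℕ) (d : ℤ) : ℤ := d / e * (d + d % e - e)

section Excess

variable {e : ℕ}

lemma excess_mul_add (he : 0 < e) (k r : ℤ) (hr₀ : 0 ≤ r) (hr : r ≤ e) :
    excess e (e * k + r) = k * (e * k + 2 * r - e) := by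
  have he' : (e : ℤ) ≠ 0 := by positivity
  rcases hr.lt_or_eq with hr | rfl
  · have hdiv : (e * k + r) / e = k := by
      rw [add_comm, Int.add_mul_ediv_left _ _ he', Int.ediv_eq_zero_of_lt hr₀ hr, zero_add]
    have hmod : (e * k + r) % e = r := by
      rw [add_comm, Int.add_mul_emod_self_left, Int.emod_eq_of_lt hr₀ hr]
    rw [excess, hdiv, hmod]
    ring
  · have hdiv : (e * k + e) / e = k + 1 := by
      rw [show (e : ℤ) * k + e = e * (k + 1) by ring, Int.mul_ediv_cancel_left _ he']
    have hmod : (e * k + e) % e = 0 := by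
      rw [show (e : ℤ) * k + e = e * (k + 1) by ring, Int.mul_emod_right]
    rw [excess, hdiv, hmod]
    ring

lemma exists_mul_add (he : 0 < e) (d : ℤ) : ∃ k r : ℤ, d = e * k + r ∧ 0 ≤ r ∧ r < e :=
  ⟨d / e, d % e, (Int.mul_ediv_add_emod d e).symm, Int.emod_nonneg _ (by positivity),
    Int.emod_lt_of_pos _ (by positivity)⟩

lemma excess_add (he : 0 < e) (d : ℤ) : excess e (d + e) = excess e d + 2 * d := by
  obtain ⟨k, r, rfl, hr₀, hr⟩ := exists_mul_add he d
  rw [show e * k + r + e = e * (k + 1) + r by ring, excess_mul_add he _ r hr₀ hr.le,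
    excess_mul_add he k r hr₀ hr.le]
  ring

lemma excess_neg (he : 0 < e) (d : ℤ) : excess e (-d) = excess e d + 2 * d := by
  obtain ⟨k, r, rfl, hr₀, hr⟩ := exists_mul_add he d
  rw [show -(e * k + r) = e * (-k - 1) + (e - r) by ring,
    excess_mul_add he _ _ (by omega) (by omega), excess_mul_add he k r hr₀ hr.le]
  ring

lemma excess_nonneg (he : 0 < e) (d : ℤ) : 0 ≤ excess e d := by
  obtain ⟨k, r, rfl, hr₀, hr⟩ := exists_mul_add he d
  rw [excess_mul_add he k r hr₀ hr.le]
  rcases lt_trichotomy k 0 with hk | rfl | hk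
  · have : (e : ℤ) * k ≤ -e := by nlinarith
    exact mul_nonneg_of_nonpos_of_nonpos hk.le (by linarith)
  · simp
  · have : (e : ℤ) ≤ e * k := by nlinarith
    exact mul_nonneg hk.le (by linarith)

lemma excess_eq_zero_iff (he : 0 < e) (d : ℤ) : excess e d = 0 ↔ 0 ≤ d ∧ d ≤ e := by
  obtain ⟨k, r, rfl, hr₀, hr⟩ := exists_mul_add he d
  rw [excess_mul_add he k r hr₀ hr.le, mul_eq_zero]
  constructor
  · rintro (rfl | h)
    · omega
    · constructor <;> linarith
  · rintro ⟨h₀, h₁⟩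
    have hk₀ : 0 ≤ k := by
      by_contra! hk
      nlinarith
    have hk₁ : k ≤ 1 := by
      by_contra! hk
      nlinarith
    interval_cases k
    · exact Or.inl rfl
    · exact Or.inr (by linarith)

end Excess

-- For `(p, a) = (λ^{(j)}, s_j)` and `(q, b) = (λ^{(k)}, s_k)` with `k < j`: the pairs counted by
-- `wtPart e ℓ Λ s` with the bead from component `j` and the gap from component `k`, or vice versa.
noncomputable def pairCount (e : ℕ) (p q : ℕ → ℕ) (a b : ℤ) : ℤ :=
  (crossPairs e (betaOf p a) (betaOf q b) 1).ncard +
    (crossPairs e (betaOf q b) (betaOf p a) 0).ncard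

noncomputable def pairTerm (e : ℕ) (p q : ℕ → ℕ) (a b : ℤ) : ℤ :=
  2 * pairCount e p q a b - excess e (a - b)

section PairTerm

variable {e : ℕ} {p q : ℕ → ℕ}

lemma pairCount_add_add (a b c : ℤ) : pairCount e p q (a + c) (b + c) = pairCount e p q a b := by
  rw [pairCount, ncard_crossPairs_betaOf_shift (a := a) (b := b) 0 1 (by ring),
    ncard_crossPairs_betaOf_shift (a := b) (b := a) 0 0 (by ring), sub_zero, sub_zero, pairCount]

lemma ncard_crossPairs_zero_sub_one (he : 0 < e) (hp : IsPartitionFun p) (hq : IsPartitionFun q)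
    (a b : ℤ) :
    ((crossPairs e (betaOf p a) (betaOf q b) 0).ncard : ℤ) -
      (crossPairs e (betaOf p a) (betaOf q b) 1).ncard = (betaOf p a \ betaOf q b).ncard := by
  rw [ncard_crossPairs_betaOf_succ he hp hq a b 0, zero_add, mul_zero, add_zero]
  push_cast
  ring

lemma pairCount_add_left (he : 0 < e) (hp : IsPartitionFun p) (hq : IsPartitionFun q)
    (a b : ℤ) : pairCount e p q (a + e) b = pairCount e p q a b + (a - b) := by
  rw [pairCount, ncard_crossPairs_betaOf_shift (a := a) (b := b) 1 1 (by ring),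
    ncard_crossPairs_betaOf_shift (a := b) (b := a) (-1) 0 (by ring), sub_self, sub_neg_eq_add,
    zero_add, pairCount]
  have h₁ := ncard_crossPairs_zero_sub_one he hp hq a b
  have h₂ := ncard_crossPairs_zero_sub_one he hq hp b a
  have h₃ := ncard_betaOf_diff_sub hp hq a b
  linarith

lemma pairCount_comm (he : 0 < e) (hp : IsPartitionFun p) (hq : IsPartitionFun q) (a b : ℤ) :
    pairCount e q p b a = pairCount e p q a b + (a - b) := by
  have h₁ := ncard_crossPairs_zero_sub_one he hp hq a b
  have h₂ := ncard_crossPairs_zero_sub_one he hq hp b a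
  have h₃ := ncard_betaOf_diff_sub hp hq a b
  rw [pairCount, pairCount]
  linarith

lemma pairTerm_comm (he : 0 < e) (hp : IsPartitionFun p) (hq : IsPartitionFun q) (a b : ℤ) :
    pairTerm e q p b a = pairTerm e p q a b := by
  rw [pairTerm, pairTerm, pairCount_comm he hp hq, show b - a = -(a - b) by ring, excess_neg he]
  ring

lemma pairTerm_add_left (he : 0 < e) (hp : IsPartitionFun p) (hq : IsPartitionFun q)
    (a b : ℤ) : pairTerm e p q (a + e) b = pairTerm e p q a b := by
  rw [pairTerm, pairTerm, pairCount_add_left he hp hq, show a + e - b = a - b + e by ring,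
    excess_add he]
  ring

lemma pairTerm_add_mul_left (he : 0 < e) (hp : IsPartitionFun p) (hq : IsPartitionFun q)
    (a b n : ℤ) : pairTerm e p q (a + e * n) b = pairTerm e p q a b := by
  induction n using Int.induction_on with
  | zero => simp
  | succ i ih => rw [← ih, ← pairTerm_add_left he hp hq (a + e * i)]; ring_nf
  | pred i ih => rw [← ih, ← pairTerm_add_left he hp hq (a + e * (-i - 1))]; ring_nf

lemma pairTerm_add_mul (he : 0 < e) (hp : IsPartitionFun p) (hq : IsPartitionFun q)
    (a b v w : ℤ) : pairTerm e p q (a + e * v) (b + e * w) = pairTerm e p q a b := by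
  rw [← pairTerm_add_mul_left he hp hq a b (v - w), pairTerm, pairTerm,
    show a + e * v = a + e * (v - w) + e * w by ring, pairCount_add_add]
  ring_nf

end PairTerm

section Sums

variable {α : Type*} [Fintype α] [LinearOrder α] [LocallyFiniteOrderTop α]
  [LocallyFiniteOrderBot α]

lemma sum_sum_eq_sum_add_sum_Iio {M : Type*} [AddCommMonoid M] (F : α → α → M) :
    ∑ j, ∑ k, F j k = ∑ j, F j j + ∑ j, ∑ k ∈ Iio j, (F j k + F k j) := by
  have hrow : ∀ j, ∑ k, F j k = F j j + (∑ k ∈ Finset.Ioi j, F j k + ∑ k ∈ Iio j, F j k) :=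
    fun j => by
      rw [Fintype.sum_eq_add_sum_compl j, ← Finset.Ioi_disjUnion_Iio, Finset.sum_disjUnion]
  have hswap : ∑ j, ∑ k ∈ Finset.Ioi j, F j k = ∑ j, ∑ k ∈ Iio j, F k j :=
    Finset.sum_comm' fun j k => by simp
  simp only [hrow, Finset.sum_add_distrib, hswap]
  abel

lemma sum_sum_eq_sum_add_two_mul_sum_Iio {T : α → α → ℤ} (hT : ∀ j k, T k j = T j k) :
    ∑ j, ∑ k, T j k = ∑ j, T j j + 2 * ∑ j, ∑ k ∈ Iio j, T j k := by
  rw [sum_sum_eq_sum_add_sum_Iio, Finset.mul_sum]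
  congr 1
  refine Finset.sum_congr rfl fun j _ => ?_
  rw [Finset.mul_sum]
  exact Finset.sum_congr rfl fun k _ => by rw [hT]; ring

lemma sum_sum_Iio_perm_of_symm {T : α → α → ℤ} (hT : ∀ j k, T k j = T j k)
    (σ : Equiv.Perm α) :
    ∑ j, ∑ k ∈ Iio j, T (σ j) (σ k) = ∑ j, ∑ k ∈ Iio j, T j k := by
  have h₁ := sum_sum_eq_sum_add_two_mul_sum_Iio (T := fun j k => T (σ j) (σ k)) fun j k => hT _ _
  have h₂ := sum_sum_eq_sum_add_two_mul_sum_Iio hT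
  simp only [Equiv.sum_comp σ (T _), Equiv.sum_comp σ (fun j => ∑ k, T j k),
    Equiv.sum_comp σ (fun j => T j j)] at h₁
  linarith

end Sums

def pairOffset {ℓ : ℕ} (j k : Fin ℓ) : ℤ := if k ≤ j then 1 else 0

section Uglov

variable {e ℓ : ℕ}

lemma upsilon_modEq (j : ℕ) (x : ℤ) : upsilon e ℓ j x ≡ x [ZMOD e] := by
  refine Int.modEq_iff_dvd.2 ⟨-(x / e) * (ℓ - 1) - (ℓ - j), ?_⟩
  rw [upsilon, Int.emod_def]
  ring

lemma upsilon_sub_upsilon {ξ η : ℤ} (h : ξ ≡ η [ZMOD e]) (j k : ℕ) :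
    upsilon e ℓ j ξ - upsilon e ℓ k η = ℓ * (ξ - η) + e * (k - j) := by
  rw [upsilon, upsilon, h.eq]
  ring

lemma one_le_mul_add_sub_iff (j k : Fin ℓ) (D : ℤ) :
    1 ≤ ℓ * D + (k - j) ↔ pairOffset j k ≤ D := by
  have hj : (j : ℤ) < ℓ := by exact_mod_cast j.2
  have hk : (k : ℤ) < ℓ := by exact_mod_cast k.2
  have hkj : k ≤ j ↔ (k : ℤ) ≤ j := by rw [Fin.le_iff_val_le_val]; omega
  have hoff : 0 ≤ pairOffset j k ∧ pairOffset j k ≤ 1 := by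
    unfold pairOffset; split_ifs <;> norm_num
  rcases lt_trichotomy D 0 with hD | rfl | hD
  · have : (ℓ : ℤ) * D ≤ -ℓ := by nlinarith
    constructor <;> intro h <;> linarith
  · unfold pairOffset
    split_ifs with h <;> simp only [mul_zero, zero_add] <;> omega
  · have : (ℓ : ℤ) ≤ ℓ * D := by nlinarith
    constructor <;> intro h <;> linarith

lemma upsilon_add_le_iff (he : 0 < e) (j k : Fin ℓ) {ξ η : ℤ} (h : ξ ≡ η [ZMOD e]) :
    upsilon e ℓ (k + 1) η + e * 1 ≤ upsilon e ℓ (j + 1) ξ ↔ η + e * pairOffset j k ≤ ξ := by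
  obtain ⟨D, hD⟩ := h.symm.dvd
  have hsub := upsilon_sub_upsilon (ℓ := ℓ) h (j + 1) (k + 1)
  push_cast at hsub
  have hdiff : upsilon e ℓ (j + 1) ξ - upsilon e ℓ (k + 1) η = e * (ℓ * D + (k - j)) := by
    rw [hsub, hD]; ring
  rw [← sub_nonneg, show upsilon e ℓ (j + 1) ξ - (upsilon e ℓ (k + 1) η + e * 1) =
    e * (ℓ * D + (k - j)) - e * 1 by rw [← hdiff]; ring, sub_nonneg,
    mul_le_mul_iff_of_pos_left (by positivity), one_le_mul_add_sub_iff,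
    ← mul_le_mul_iff_of_pos_left (by positivity : (0 : ℤ) < e), ← hD]
  constructor <;> intro h <;> linarith

lemma upsilon_injective₂ (he : 0 < e) {j k : Fin ℓ} {ξ η : ℤ}
    (h : upsilon e ℓ (j + 1) ξ = upsilon e ℓ (k + 1) η) : j = k ∧ ξ = η := by
  have hmod : ξ ≡ η [ZMOD e] :=
    (upsilon_modEq (j + 1) ξ).symm.trans (h ▸ upsilon_modEq (k + 1) η)
  obtain ⟨D, hD⟩ := hmod.symm.dvd
  have hsub := upsilon_sub_upsilon (ℓ := ℓ) hmod (j + 1) (k + 1)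
  rw [h, sub_self, hD] at hsub
  push_cast at hsub
  have hzero : (ℓ : ℤ) * D + (k - j) = 0 := by
    have : (e : ℤ) * (ℓ * D + (k - j)) = 0 := by linarith
    exact (mul_eq_zero.1 this).resolve_left (by positivity)
  have hj : (j : ℤ) < ℓ := by exact_mod_cast j.2
  have hk : (k : ℤ) < ℓ := by exact_mod_cast k.2
  obtain rfl : D = 0 := by
    rcases lt_trichotomy D 0 with hD | hD | hD
    · nlinarith
    · exact hD
    · nlinarith
  exact ⟨Fin.ext (by omega), by linarith⟩

lemma upsilon_surjective₂ (hℓ : 0 < ℓ) (y : ℤ) :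
    ∃ (j : Fin ℓ) (ξ : ℤ), upsilon e ℓ (j + 1) ξ = y := by
  have hℓ' : (0 : ℤ) < ℓ := by exact_mod_cast hℓ
  have hρ₀ := Int.emod_nonneg (y / e) hℓ'.ne'
  have hρ := Int.emod_lt_of_pos (y / e) hℓ'
  refine ⟨⟨ℓ - 1 - (y / e % ℓ).toNat, by omega⟩, e * (y / e / ℓ) + y % e, ?_⟩
  have hmod : (e * (y / e / ℓ) + y % e) % e = y % e := by
    rw [add_comm, Int.add_mul_emod_self_left, Int.emod_emod]
  have hρcast : ((ℓ - 1 - (y / e % ℓ).toNat : ℕ) : ℤ) = ℓ - 1 - y / e % ℓ := by omega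
  rw [upsilon, hmod]
  push_cast
  rw [hρcast]
  have h₁ := Int.mul_ediv_add_emod y e
  have h₂ := Int.mul_ediv_add_emod (y / e) ℓ
  linear_combination h₁ + e * h₂

lemma upsilon_mem_uglovU_iff (he : 0 < e) {B : Fin ℓ → Set ℤ} {j : Fin ℓ} {ξ : ℤ} :
    upsilon e ℓ (j + 1) ξ ∈ uglovU e ℓ B ↔ ξ ∈ B j := by
  simp only [uglovU, Set.mem_iUnion, Set.mem_image]
  constructor
  · rintro ⟨k, η, hη, h⟩
    obtain ⟨rfl, rfl⟩ := upsilon_injective₂ he h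
    exact hη
  · exact fun hξ => ⟨j, ξ, hξ, rfl⟩

end Uglov

section Master

variable {e ℓ : ℕ}

lemma crossPairs_uglovU (he : 0 < e) (B : Fin ℓ → Set ℤ) :
    crossPairs e (uglovU e ℓ B) (uglovU e ℓ B) 1 =
      ⋃ jk : Fin ℓ × Fin ℓ, Prod.map (upsilon e ℓ (jk.1 + 1)) (upsilon e ℓ (jk.2 + 1)) ''
        crossPairs e (B jk.1) (B jk.2) (pairOffset jk.1 jk.2) := by
  ext ⟨x, y⟩
  simp only [Set.mem_iUnion, Set.mem_image, Prod.exists, Prod.map, Prod.mk.injEq]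
  constructor
  · rintro ⟨hx, hy, hxy, hle⟩
    obtain ⟨j, ξ, hξ, rfl⟩ : ∃ j ξ, ξ ∈ B j ∧ upsilon e ℓ (j + 1) ξ = x := by
      simpa [uglovU] using hx
    obtain ⟨k, η, rfl⟩ := upsilon_surjective₂ (e := e) j.pos y
    have hmod : ξ ≡ η [ZMOD e] := ((upsilon_modEq (j + 1) ξ).symm.trans
      (Int.modEq_iff_dvd.2 hxy).symm).trans (upsilon_modEq (k + 1) η)
    refine ⟨j, k, ξ, η, ⟨hξ, fun hη => hy ((upsilon_mem_uglovU_iff he).2 hη),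
      hmod.symm.dvd, (upsilon_add_le_iff he j k hmod).1 hle⟩, rfl, rfl⟩
  · rintro ⟨j, k, ξ, η, ⟨hξ, hη, hξη, hle⟩, rfl, rfl⟩
    have hmod : ξ ≡ η [ZMOD e] := (Int.modEq_iff_dvd.2 hξη).symm
    exact ⟨(upsilon_mem_uglovU_iff he).2 hξ, fun h => hη ((upsilon_mem_uglovU_iff he).1 h),
      (((upsilon_modEq (k + 1) η).trans hmod.symm).trans (upsilon_modEq (j + 1) ξ).symm).dvd,
      (upsilon_add_le_iff he j k hmod).2 hle⟩

lemma crossPairs_eq_iUnion_quotComp (he : 0 < e) (B : Set ℤ) :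
    crossPairs e B B 1 = ⋃ i : Fin e, (fun z : ℤ × ℤ => (z.1 * e + i, z.2 * e + i)) ''
      {z | z.1 ∈ quotComp e B i ∧ z.2 ∉ quotComp e B i ∧ z.2 < z.1} := by
  have he' : (0 : ℤ) < e := by exact_mod_cast he
  ext ⟨x, y⟩
  simp only [crossPairs, quotComp, Set.mem_iUnion, Set.mem_image, Set.mem_ofPred_eq, Prod.exists,
    Prod.mk.injEq]
  constructor
  · rintro ⟨hx, hy, hxy, hle⟩
    have hyx : y % e = x % e := (Int.modEq_iff_dvd.2 hxy).eq
    have hr : (((x % e).toNat : ℕ) : ℤ) = x % e := Int.toNat_of_nonneg (Int.emod_nonneg _ he'.ne')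
    have hxe := Int.mul_ediv_add_emod x e
    have hye := Int.mul_ediv_add_emod y e
    have hx' : x / e * e + (((x % e).toNat : ℕ) : ℤ) = x := by rw [hr]; linarith
    have hy' : y / e * e + (((x % e).toNat : ℕ) : ℤ) = y := by rw [hr]; linarith
    refine ⟨⟨(x % e).toNat, by have := Int.emod_lt_of_pos x he'; omega⟩, x / e, y / e,
      ⟨by rwa [hx'], by rwa [hy'], ?_⟩, hx', hy'⟩
    have : (e : ℤ) * (y / e + 1) ≤ e * (x / e) := by linarith
    have := le_of_mul_le_mul_left this he'
    omega
  · rintro ⟨i, a, b, ⟨ha, hb, hab⟩, rfl, rfl⟩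
    refine ⟨ha, hb, ⟨a - b, by ring⟩, ?_⟩
    have : (b + 1) * (e : ℤ) ≤ a * e := mul_le_mul_of_nonneg_right (by omega) he'.le
    linarith

lemma wtSet_eq_ncard_crossPairs (he : 0 < e) {B : Set ℤ} (hB : (crossPairs e B B 1).Finite) :
    wtSet e B = (crossPairs e B B 1).ncard := by
  have he' : (0 : ℤ) < e := by exact_mod_cast he
  have hdigits : ∀ {a a' : ℤ} {i i' : Fin e}, a * e + i = a' * e + i' → a = a' ∧ i = i' := by
    intro a a' i i' h
    have hi := (Int.ediv_emod_unique he').2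
      ⟨show (i : ℤ) + e * a = a * e + i by ring, by positivity, by exact_mod_cast i.2⟩
    have hi' := (Int.ediv_emod_unique he').2
      ⟨show (i' : ℤ) + e * a' = a' * e + i' by ring, by positivity, by exact_mod_cast i'.2⟩
    rw [h] at hi
    exact ⟨hi.1.symm.trans hi'.1, Fin.ext (by exact_mod_cast hi.2.symm.trans hi'.2)⟩
  rw [crossPairs_eq_iUnion_quotComp he] at hB ⊢
  rw [ncard_iUnion_image_eq_sum _ hB, wtSet, Finset.sum_range]
  rintro i i' ⟨a, b⟩ - ⟨a', b'⟩ - h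
  simp only [Prod.mk.injEq] at h
  obtain ⟨rfl, rfl⟩ := hdigits h.1
  exact ⟨rfl, Prod.ext rfl (hdigits h.2).1⟩

lemma wtPart_eq_sum (he : 0 < e) {Λ : Fin ℓ → ℕ → ℕ} (hΛ : ∀ j, IsPartitionFun (Λ j))
    (s : Fin ℓ → ℤ) :
    wtPart e ℓ Λ s = ∑ j, ∑ k,
      (crossPairs e (betaOf (Λ j) (s j)) (betaOf (Λ k) (s k)) (pairOffset j k)).ncard := by
  have hfin : (⋃ jk : Fin ℓ × Fin ℓ, Prod.map (upsilon e ℓ (jk.1 + 1)) (upsilon e ℓ (jk.2 + 1)) ''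
      crossPairs e (betaOf (Λ jk.1) (s jk.1)) (betaOf (Λ jk.2) (s jk.2))
        (pairOffset jk.1 jk.2)).Finite :=
    Set.finite_iUnion fun jk => (crossPairs_betaOf_finite (hΛ _) (hΛ _) _ _ _).image _
  rw [wtPart, uglovMulti, wtSet_eq_ncard_crossPairs he (by rwa [crossPairs_uglovU he]),
    crossPairs_uglovU he, ncard_iUnion_image_eq_sum _ hfin, Fintype.sum_prod_type]
  rintro ⟨j, k⟩ ⟨j', k'⟩ ⟨ξ, η⟩ - ⟨ξ', η'⟩ - h
  simp only [Prod.map, Prod.mk.injEq] at h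
  obtain ⟨rfl, rfl⟩ := upsilon_injective₂ he h.1
  obtain ⟨rfl, rfl⟩ := upsilon_injective₂ he h.2
  exact ⟨rfl, rfl⟩

end Master

noncomputable def orbitConst (e ℓ : ℕ) (Λ : Fin ℓ → ℕ → ℕ) (s : Fin ℓ → ℤ) : ℤ :=
  ∑ j, 2 * ((crossPairs e (betaOf (Λ j) (s j)) (betaOf (Λ j) (s j)) 1).ncard : ℤ) +
    ∑ j, ∑ k ∈ Iio j, pairTerm e (Λ j) (Λ k) (s j) (s k)

def chargeExcess (e : ℕ) {ℓ : ℕ} (s : Fin ℓ → ℤ) : ℤ :=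
  ∑ j, ∑ k ∈ Iio j, excess e (s j - s k)

section Orbit

variable {e ℓ : ℕ}

lemma two_mul_wtPart (he : 0 < e) {Λ : Fin ℓ → ℕ → ℕ} (hΛ : ∀ j, IsPartitionFun (Λ j))
    (s : Fin ℓ → ℤ) : 2 * (wtPart e ℓ Λ s : ℤ) = orbitConst e ℓ Λ s + chargeExcess e s := by
  have hdiag : ∀ j : Fin ℓ, pairOffset j j = 1 := fun j => if_pos le_rfl
  have hlower : ∀ j k : Fin ℓ, k < j → pairOffset j k = 1 ∧ pairOffset k j = 0 :=
    fun j k hkj => ⟨if_pos hkj.le, if_neg hkj.not_ge⟩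
  rw [wtPart_eq_sum he hΛ]
  simp only [Nat.cast_sum]
  rw [sum_sum_eq_sum_add_sum_Iio, orbitConst, chargeExcess, mul_add, Finset.mul_sum, add_assoc,
    ← Finset.sum_add_distrib (s := Finset.univ), Finset.mul_sum]
  congr 1
  · simp only [hdiag]
  · refine Finset.sum_congr rfl fun j _ => ?_
    rw [Finset.mul_sum, ← Finset.sum_add_distrib]
    refine Finset.sum_congr rfl fun k hk => ?_
    obtain ⟨h₁, h₂⟩ := hlower j k (Finset.mem_Iio.1 hk)
    rw [h₁, h₂, pairTerm, pairCount]
    ring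

lemma orbitConst_perm_add (he : 0 < e) {Λ : Fin ℓ → ℕ → ℕ} (hΛ : ∀ j, IsPartitionFun (Λ j))
    (s : Fin ℓ → ℤ) (σ : Equiv.Perm (Fin ℓ)) (v : Fin ℓ → ℤ) :
    orbitConst e ℓ (fun j => Λ (σ j)) (fun j => s (σ j) + e * v j) = orbitConst e ℓ Λ s := by
  have hdiag : ∀ j, (crossPairs e (betaOf (Λ (σ j)) (s (σ j) + e * v j))
      (betaOf (Λ (σ j)) (s (σ j) + e * v j)) 1).ncard =
      (crossPairs e (betaOf (Λ (σ j)) (s (σ j))) (betaOf (Λ (σ j)) (s (σ j))) 1).ncard :=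
    fun j => by rw [ncard_crossPairs_betaOf_shift 0 1 (by ring), sub_zero]
  simp only [orbitConst, hdiag, pairTerm_add_mul he (hΛ _) (hΛ _),
    Equiv.sum_comp σ fun j =>
      2 * ((crossPairs e (betaOf (Λ j) (s j)) (betaOf (Λ j) (s j)) 1).ncard : ℤ),
    sum_sum_Iio_perm_of_symm (T := fun j k => pairTerm e (Λ j) (Λ k) (s j) (s k))
      (fun j k => pairTerm_comm he (hΛ _) (hΛ _) _ _) σ]

lemma chargeExcess_nonneg (he : 0 < e) (s : Fin ℓ → ℤ) : 0 ≤ chargeExcess e s :=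
  Finset.sum_nonneg fun _ _ => Finset.sum_nonneg fun _ _ => excess_nonneg he _

lemma chargeExcess_eq_zero_iff (he : 0 < e) (s : Fin ℓ → ℤ) :
    chargeExcess e s = 0 ↔ memAbar e s := by
  rw [chargeExcess, Finset.sum_eq_zero_iff_of_nonneg fun _ _ =>
    Finset.sum_nonneg fun _ _ => excess_nonneg he _]
  simp only [Finset.mem_univ, true_implies, Finset.sum_eq_zero_iff_of_nonneg fun _ _ =>
    excess_nonneg he _, Finset.mem_Iio, excess_eq_zero_iff he]
  constructor
  · intro h
    have hmono : Monotone s := fun k j hkj => by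
      rcases hkj.lt_or_eq with hkj | rfl
      · linarith [(h j k hkj).1]
      · exact le_rfl
    refine ⟨hmono, fun i j => ?_⟩
    rcases lt_or_ge i j with hij | hji
    · linarith [(h j i hij).2]
    · linarith [hmono hji]
  · rintro ⟨hmono, hbound⟩ j k hkj
    exact ⟨by linarith [hmono hkj.le], by linarith [hbound k j]⟩

lemma exists_perm_memAbar (he : 0 < e) (t : Fin ℓ → ℤ) :
    ∃ (σ : Equiv.Perm (Fin ℓ)) (v : Fin ℓ → ℤ), memAbar e (fun j => t (σ j) + e * v j) := by
  have he' : (0 : ℤ) < e := by exact_mod_cast he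
  set σ := Tuple.sort fun j => t j % e
  have hres : ∀ j, t (σ j) + e * -(t (σ j) / e) = t (σ j) % e := fun j => by
    linarith [Int.mul_ediv_add_emod (t (σ j)) e]
  refine ⟨σ, fun j => -(t (σ j) / e), ?_, fun i j => ?_⟩
  · intro a b hab
    simp only [hres]
    exact Tuple.monotone_sort (fun j => t j % e) hab
  · simp only [hres]
    linarith [Int.emod_nonneg (t (σ i)) he'.ne', Int.emod_lt_of_pos (t (σ j)) he']

end Orbit

end UglovWeight

open UglovWeight

theorem stmt17_general (e ℓ : ℕ) (he : 2 ≤ e) (Λ : Fin ℓ → ℕ → ℕ)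
    (hΛ : ∀ j, IsPartitionFun (Λ j)) (t : Fin ℓ → ℤ)
    (μ : Fin ℓ → ℕ → ℕ) (u : Fin ℓ → ℤ)
    (h : ∃ σ : Equiv.Perm (Fin ℓ), ∃ v : Fin ℓ → ℤ,
      μ = (fun j => Λ (σ j)) ∧ u = (fun j => t (σ j) + (e : ℤ) * v j)) :
    wtPart e ℓ μ u = sInf (orbitWeights e ℓ Λ t) ↔ memAbar e u := by
  have he₀ : 0 < e := by omega
  have hweight : ∀ (σ : Equiv.Perm (Fin ℓ)) (v : Fin ℓ → ℤ),
      2 * (wtPart e ℓ (fun j => Λ (σ j)) (fun j => t (σ j) + e * v j) : ℤ) =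
        orbitConst e ℓ Λ t + chargeExcess e (fun j => t (σ j) + e * v j) := fun σ v => by
    rw [two_mul_wtPart he₀ fun j => hΛ (σ j), orbitConst_perm_add he₀ hΛ]
  obtain ⟨σ₀, v₀, hAbar₀⟩ := exists_perm_memAbar he₀ t
  have hw₀ := hweight σ₀ v₀
  rw [(chargeExcess_eq_zero_iff he₀ _).2 hAbar₀] at hw₀
  have hsInf : sInf (orbitWeights e ℓ Λ t) =
      wtPart e ℓ (fun j => Λ (σ₀ j)) (fun j => t (σ₀ j) + e * v₀ j) := by
    refine le_antisymm (Nat.sInf_le ⟨σ₀, v₀, rfl⟩) (le_csInf ⟨_, σ₀, v₀, rfl⟩ ?_)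
    rintro _ ⟨σ, v, rfl⟩
    have := hweight σ v
    have := chargeExcess_nonneg he₀ fun j => t (σ j) + e * v j
    omega
  obtain ⟨σ, v, rfl, rfl⟩ := h
  rw [hsInf, ← chargeExcess_eq_zero_iff he₀]
  have := hweight σ v
  omega

/-- for (μ; u) in the Ŵ_ℓ-orbit of (λ; t), wt_e(μ; u) is the minimum of the
e-weights over the orbit if and only if u ∈ Ā_e^ℓ. -/
theorem stmt17 (e ℓ : ℕ) (he : 2 ≤ e) (hl : 1 ≤ ℓ) (Λ : Fin ℓ → ℕ → ℕ)
    (hΛ : ∀ j, IsPartitionFun (Λ j)) (t : Fin ℓ → ℤ)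
    (μ : Fin ℓ → ℕ → ℕ) (u : Fin ℓ → ℤ)
    (h : ∃ σ : Equiv.Perm (Fin ℓ), ∃ v : Fin ℓ → ℤ,
      μ = (fun j => Λ (σ j)) ∧ u = (fun j => t (σ j) + (e : ℤ) * v j)) :
    wtPart e ℓ μ u = sInf (orbitWeights e ℓ Λ t) ↔ memAbar e u :=
  stmt17_general e ℓ he Λ hΛ t μ u h
end

section
/- Let λ be an ℓ-partition, r ∈ ℤ^ℓ a multicharge, and i ∈ ℤ/eℤ. If min{wt_e(ν; w) : (ν; w) in the Ŵ_ℓ-orbit of (λ; r)} ≤ δ_i^r(λ), then λ has no addable i-node relative to r. -/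
/-!
An addable `i`-node of `λ` is a bead `y` of some `β_{r_j}(λ^{(j)})` with `y + 1` free and
`y + 1 ≡ i (mod e)`. In the Uglov set `U`, whose runners `U_c` interleave the runners of the
components, `δ_i^r(λ) = s(U_i) - s(U_{i-1}) - ℓk` (with `k = [i = 0]`), the bead `y` sits on
`U_{i-1}` at some position `α` and the gap `y + 1` on `U_i` at position `α + ℓk`. Counting the
inversions of `U_i` through that gap and of `U_{i-1}` through that bead gives
`wt_e(U) ≥ (s(U_i) - α - ℓk) + (α - s(U_{i-1}) + 1) = δ_i^r(λ) + 1`. Since `δ_i` and the bead are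
carried along the `Ŵ_ℓ`-orbit, every weight in the orbit exceeds `δ_i^r(λ)`.
-/

open Set

theorem mem_shiftSet {B : Set ℤ} {k x : ℤ} : x ∈ shiftSet B k ↔ x - k ∈ B := by
  simp [shiftSet, sub_eq_add_neg]

theorem ncard_shiftSet (B : Set ℤ) (k : ℤ) : (shiftSet B k).ncard = B.ncard :=
  ncard_image_of_injective B (add_left_injective k)

def inversions (C : Set ℤ) : Set (ℤ × ℤ) := {p | p.1 ∈ C ∧ p.2 ∉ C ∧ p.2 < p.1}

namespace IsBetaSet

theorem iff_bounds {B : Set ℤ} :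
    IsBetaSet B ↔ (∃ lo, ∀ x < lo, x ∈ B) ∧ ∃ hi, ∀ x ∈ B, x < hi := by
  constructor
  · rintro ⟨⟨M, -, hM⟩, ⟨m, hm, hmin⟩⟩
    refine ⟨⟨m, fun x hx => ?_⟩, ⟨M + 1, fun x hx => Int.lt_add_one_iff.2 (hM x hx)⟩⟩
    by_contra hxB
    exact absurd (hmin x hxB) (not_le.2 hx)
  · rintro ⟨⟨lo, hlo⟩, ⟨hi, hhi⟩⟩
    refine ⟨Int.exists_greatest_of_bdd ⟨hi, fun x hx => (hhi x hx).le⟩ ⟨lo - 1, hlo _ (by omega)⟩,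
      ?_⟩
    obtain ⟨m, hm, hmin⟩ := Int.exists_least_of_bdd (P := (· ∉ B))
      ⟨lo, fun x hx => not_lt.1 fun h => hx (hlo x h)⟩ ⟨hi, fun h => (hhi hi h).false⟩
    exact ⟨m, hm, hmin⟩

variable {B C : Set ℤ}

theorem exists_forall_lt_mem (hB : IsBetaSet B) : ∃ lo, ∀ x < lo, x ∈ B :=
  (iff_bounds.1 hB).1

theorem exists_forall_mem_lt (hB : IsBetaSet B) : ∃ hi, ∀ x ∈ B, x < hi :=
  (iff_bounds.1 hB).2

theorem finite_inter_Ici (hB : IsBetaSet B) (m : ℤ) : (B ∩ Ici m).Finite := by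
  obtain ⟨hi, hhi⟩ := hB.exists_forall_mem_lt
  exact (finite_Ico m hi).subset fun x hx => ⟨hx.2, hhi x hx.1⟩

theorem finite_Iio_diff (hB : IsBetaSet B) (m : ℤ) : (Iio m \ B).Finite := by
  obtain ⟨lo, hlo⟩ := hB.exists_forall_lt_mem
  exact (finite_Ico lo m).subset fun x hx => ⟨not_lt.1 fun h => hx.2 (hlo x h), hx.1⟩

theorem ncard_Iio_diff_sub_ncard_inter_Ici (hB : IsBetaSet B) (m : ℤ) :
    ((Iio m \ B).ncard : ℤ) - (B ∩ Ici m).ncard = m - charge B := by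
  -- Moving the cut from `m` up to `m'` turns every point of `[m, m')` into either a gap below
  -- the cut or one bead fewer above it; at `m = 0` the difference is `-charge B` by definition.
  have step : ∀ m m' : ℤ, m ≤ m' →
      ((Iio m' \ B).ncard : ℤ) - (B ∩ Ici m').ncard
        = (Iio m \ B).ncard - (B ∩ Ici m).ncard + (m' - m) := by
    intro m m' hmm'
    have hgaps : Iio m' \ B = (Iio m \ B) ∪ (Ico m m' \ B) := by
      ext x; by_cases hx : x ∈ B <;> simp [hx]; omega
    have hbeads : B ∩ Ici m = (Ico m m' ∩ B) ∪ (B ∩ Ici m') := by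
      ext x; by_cases hx : x ∈ B <;> simp [hx]; omega
    have hIco : (Ico m m').ncard = (m' - m).toNat := by
      rw [← Finset.coe_Ico, ncard_coe_finset, Int.card_Ico]
    have hsplit := ncard_inter_add_ncard_sdiff_eq_ncard (Ico m m') B
    rw [hgaps, hbeads, ncard_union_eq (by grind) (hB.finite_Iio_diff m),
      ncard_union_eq (by grind) ((finite_Ico m m').inter_of_left B) (hB.finite_inter_Ici m')]
    omega
  have base : ((Iio 0 \ B).ncard : ℤ) - (B ∩ Ici 0).ncard = -charge B := by
    rw [charge]; simp only [Iio, Ici]; ring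
  rcases le_total 0 m with hm | hm
  · rw [step 0 m hm, base]; ring
  · linarith [step m 0 hm]

theorem charge_eq_of_forall_lt_mem (hB : IsBetaSet B) {m : ℤ} (hm : ∀ x < m, x ∈ B) :
    charge B = m + (B ∩ Ici m).ncard := by
  have hgaps : Iio m \ B = ∅ := eq_empty_of_forall_notMem fun x hx => hx.2 (hm x hx.1)
  have := hB.ncard_Iio_diff_sub_ncard_inter_Ici m
  rw [hgaps, ncard_empty] at this
  omega

theorem ncard_diff_sub_ncard_diff (hB : IsBetaSet B) (hC : IsBetaSet C) :
    ((B \ C).ncard : ℤ) - (C \ B).ncard = charge B - charge C := by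
  obtain ⟨lo, hlo⟩ := hB.exists_forall_lt_mem
  obtain ⟨lo', hlo'⟩ := hC.exists_forall_lt_mem
  set m := min lo lo'
  have hBm : ∀ x < m, x ∈ B := fun x hx => hlo x (by omega)
  have hCm : ∀ x < m, x ∈ C := fun x hx => hlo' x (by omega)
  have hBC : B \ C = (B ∩ Ici m) \ (C ∩ Ici m) := by
    ext x; by_cases hx : x < m <;> simp_all
  have hCB : C \ B = (C ∩ Ici m) \ (B ∩ Ici m) := by
    ext x; by_cases hx : x < m <;> simp_all
  have h1 := ncard_inter_add_ncard_sdiff_eq_ncard (B ∩ Ici m) (C ∩ Ici m) (hB.finite_inter_Ici m)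
  have h2 := ncard_inter_add_ncard_sdiff_eq_ncard (C ∩ Ici m) (B ∩ Ici m) (hC.finite_inter_Ici m)
  rw [inter_comm (C ∩ Ici m)] at h2
  rw [hBC, hCB, hB.charge_eq_of_forall_lt_mem hBm, hC.charge_eq_of_forall_lt_mem hCm]
  omega

theorem _root_.isBetaSet_shiftSet (hB : IsBetaSet B) (k : ℤ) : IsBetaSet (shiftSet B k) := by
  obtain ⟨lo, hlo⟩ := hB.exists_forall_lt_mem
  obtain ⟨hi, hhi⟩ := hB.exists_forall_mem_lt
  refine iff_bounds.2 ⟨⟨lo + k, fun x hx => mem_shiftSet.2 (hlo _ (by omega))⟩,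
    ⟨hi + k, fun x hx => ?_⟩⟩
  linarith [hhi _ (mem_shiftSet.1 hx)]

theorem charge_shiftSet (hB : IsBetaSet B) (k : ℤ) : charge (shiftSet B k) = charge B + k := by
  obtain ⟨lo, hlo⟩ := hB.exists_forall_lt_mem
  have hshift : shiftSet B k ∩ Ici (lo + k) = shiftSet (B ∩ Ici lo) k := by
    rw [shiftSet, shiftSet, image_inter (add_left_injective k), image_add_const_Ici]
  rw [(isBetaSet_shiftSet hB k).charge_eq_of_forall_lt_mem (m := lo + k)
      fun x hx => mem_shiftSet.2 (hlo _ (by omega)),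
    hshift, ncard_shiftSet, hB.charge_eq_of_forall_lt_mem hlo]
  ring

theorem finite_inversions (hC : IsBetaSet C) : (inversions C).Finite := by
  obtain ⟨lo, hlo⟩ := hC.exists_forall_lt_mem
  obtain ⟨hi, hhi⟩ := hC.exists_forall_mem_lt
  refine ((hC.finite_inter_Ici lo).prod (hC.finite_Iio_diff hi)).subset ?_
  rintro ⟨x, y⟩ ⟨hx, hy, hyx⟩
  have hloy : lo ≤ y := not_lt.1 fun h => hy (hlo y h)
  exact ⟨⟨hx, by simp only [mem_Ici]; omega⟩, ⟨by simp only [mem_Iio]; linarith [hhi x hx], hy⟩⟩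

theorem charge_sub_le_ncard_inversions (hC : IsBetaSet C) {b : ℤ} (hb : b ∉ C) :
    charge C - b ≤ (inversions C).ncard := by
  have hsub : (fun x => (x, b)) '' (C ∩ Ici b) ⊆ inversions C := by
    rintro _ ⟨x, ⟨hx, hbx⟩, rfl⟩
    exact ⟨hx, hb, lt_of_le_of_ne hbx fun h : b = x => hb (h ▸ hx)⟩
  have hle := ncard_le_ncard hsub hC.finite_inversions
  rw [ncard_image_of_injective _ (Prod.mk_left_injective b)] at hle
  have := hC.ncard_Iio_diff_sub_ncard_inter_Ici b
  omega

theorem sub_charge_lt_ncard_inversions (hC : IsBetaSet C) {a : ℤ} (ha : a ∈ C) :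
    a - charge C < (inversions C).ncard := by
  have hsub : Prod.mk a '' (Iio a \ C) ⊆ inversions C := by
    rintro _ ⟨y, ⟨hya, hy⟩, rfl⟩
    exact ⟨ha, hy, hya⟩
  have hle := ncard_le_ncard hsub hC.finite_inversions
  rw [ncard_image_of_injective _ (Prod.mk_right_injective a)] at hle
  have hpos : 0 < (C ∩ Ici a).ncard :=
    (ncard_pos (hC.finite_inter_Ici a)).2 ⟨a, ha, le_refl a⟩
  have := hC.ncard_Iio_diff_sub_ncard_inter_Ici a
  omega

end IsBetaSet

section Partition

variable {p : ℕ → ℕ}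

theorem isBetaSet_betaOf (hp : IsPartitionFun p) (t : ℤ) : IsBetaSet (betaOf p t) := by
  obtain ⟨N, hN⟩ := hp.2
  refine IsBetaSet.iff_bounds.2 ⟨⟨t - N, fun x hx => ⟨(t - 1 - x).toNat, ?_⟩⟩,
    ⟨p 0 + t, ?_⟩⟩
  · rw [hN _ (by omega)]
    omega
  · rintro _ ⟨a, rfl⟩
    have := hp.1 0 a a.zero_le
    omega

theorem betaOf_add (p : ℕ → ℕ) (t s : ℤ) : betaOf p (t + s) = shiftSet (betaOf p t) s := by
  ext x
  simp only [mem_shiftSet, betaOf, mem_ofPred_eq]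
  exact exists_congr fun a => by constructor <;> intro h <;> linarith

theorem add_one_notMem_betaOf (hp : IsPartitionFun p) {a : ℕ} (ha : 0 < a → p a < p (a - 1))
    (t : ℤ) : (p a : ℤ) + t - (a + 1) + 1 ∉ betaOf p t := by
  rintro ⟨c, hc⟩
  rcases lt_or_ge c a with hca | hac
  · have := hp.1 c (a - 1) (by omega)
    have := ha (by omega)
    omega
  · have := hp.1 a c hac
    omega

end Partition

theorem Int.mul_add_eq_mul_add_iff {n a b r s : ℤ} (hr : 0 ≤ r ∧ r < n) (hs : 0 ≤ s ∧ s < n) :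
    a * n + r = b * n + s ↔ a = b ∧ r = s := by
  have hn : 0 < n := by omega
  have hdiv : ∀ a r, 0 ≤ r ∧ r < n → (a * n + r) / n = a ∧ (a * n + r) % n = r :=
    fun a r hr => (Int.ediv_emod_unique hn).2 ⟨by ring, hr⟩
  constructor
  · intro h
    obtain ⟨h1, h2⟩ := hdiv a r hr
    obtain ⟨h3, h4⟩ := hdiv b s hs
    rw [h] at h1 h2
    exact ⟨h1.symm.trans h3, h2.symm.trans h4⟩
  · rintro ⟨rfl, rfl⟩
    rfl

section Quotient

variable {e : ℕ} {B : Set ℤ}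

theorem isBetaSet_quotComp (hB : IsBetaSet B) (he : 0 < e) (c : ℕ) :
    IsBetaSet (quotComp e B c) := by
  obtain ⟨lo, hlo⟩ := hB.exists_forall_lt_mem
  obtain ⟨hi, hhi⟩ := hB.exists_forall_mem_lt
  have he' : (1 : ℤ) ≤ e := by exact_mod_cast he
  refine IsBetaSet.iff_bounds.2 ⟨⟨-|lo| - c, fun a ha => hlo _ ?_⟩, ⟨|hi| + 1, fun a ha => ?_⟩⟩
  · nlinarith [le_abs_self lo, neg_abs_le lo]
  · have := hhi _ ha
    rcases lt_or_ge a 0 with h | h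
    · linarith [abs_nonneg hi]
    · nlinarith [le_abs_self hi]

theorem eq_ediv_mul_add_val [NeZero e] {x : ℤ} {i : ZMod e} (h : (x : ZMod e) = i) :
    x = x / e * e + i.val := by
  have := ZMod.val_intCast (n := e) x
  rw [h] at this
  rw [this]
  linarith [Int.mul_ediv_add_emod x e]

theorem ncard_setOf_mem_intCast_eq [NeZero e] (B : Set ℤ) (i : ZMod e) (q : ℤ → Prop) :
    {x : ℤ | x ∈ B ∧ (x : ZMod e) = i ∧ q x}.ncard
      = {a : ℤ | a ∈ quotComp e B i.val ∧ q (a * e + i.val)}.ncard := by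
  have he : (0 : ℤ) < e := by exact_mod_cast Nat.pos_of_neZero e
  have hinj : Function.Injective fun a : ℤ => a * e + i.val :=
    fun a b h => mul_right_cancel₀ he.ne' (add_right_cancel h)
  rw [← ncard_image_of_injective {a : ℤ | a ∈ quotComp e B i.val ∧ q (a * e + i.val)} hinj]
  congr 1
  ext x
  constructor
  · rintro ⟨hx, hxi, hq⟩
    rw [eq_ediv_mul_add_val hxi] at hx hq
    exact ⟨x / e, ⟨hx, hq⟩, (eq_ediv_mul_add_val hxi).symm⟩
  · rintro ⟨a, ⟨ha, hq⟩, rfl⟩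
    exact ⟨ha, by simp, hq⟩

theorem exists_val_sub_one_add_one [NeZero e] (i : ZMod e) :
    ∃ k : ℤ, ((i - 1).val : ℤ) + 1 = i.val + k * e := by
  have h : ((i.val : ℤ) : ZMod e) = (((i - 1).val + 1 : ℤ) : ZMod e) := by simp
  obtain ⟨k, hk⟩ := (ZMod.intCast_eq_intCast_iff_dvd_sub _ _ _).1 h
  exact ⟨k, by linarith⟩

/-- Here `k = 1` if `i = 0` and `k = 0` otherwise: passing from residue `i - 1` to `i` moves one
level up the abacus exactly when it wraps around. -/
theorem IsBetaSet.deltaOf_eq [NeZero e] (hB : IsBetaSet B) {i : ZMod e} {k : ℤ}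
    (hk : ((i - 1).val : ℤ) + 1 = i.val + k * e) :
    deltaOf e i B = charge (quotComp e B i.val) - charge (quotComp e B (i - 1).val) - k := by
  have he : 0 < e := Nat.pos_of_neZero e
  set P := quotComp e B i.val
  set Q := quotComp e B (i - 1).val
  have hP : IsBetaSet P := isBetaSet_quotComp hB he _
  have hQ : IsBetaSet Q := isBetaSet_quotComp hB he _
  have hleft : {a : ℤ | a ∈ P ∧ a * e + i.val - 1 ∉ B} = P \ shiftSet Q k := by
    ext a
    simp only [mem_sdiff, mem_shiftSet, Q, quotComp, mem_ofPred_eq]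
    rw [show (a - k) * e + (i - 1).val = a * e + i.val - 1 by linear_combination hk]
  have hright : shiftSet Q k \ P = shiftSet {a : ℤ | a ∈ Q ∧ a * e + (i - 1).val + 1 ∉ B} k := by
    ext a
    simp only [mem_sdiff, mem_shiftSet, P, quotComp, mem_ofPred_eq]
    rw [show (a - k) * e + (i - 1).val + 1 = a * e + i.val by linear_combination hk]
  rw [deltaOf, ncard_setOf_mem_intCast_eq, ncard_setOf_mem_intCast_eq, hleft,
    ← ncard_shiftSet {a : ℤ | a ∈ Q ∧ a * e + (i - 1).val + 1 ∉ B} k, ← hright,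
    hP.ncard_diff_sub_ncard_diff (isBetaSet_shiftSet hQ k), hQ.charge_shiftSet]
  ring

end Quotient

section Interleave

variable {ℓ : ℕ}

def interleaveIndex (ℓ : ℕ) (j : Fin ℓ) (a : ℤ) : ℤ := a * ℓ + (ℓ - 1 - j)

def interleave (ℓ : ℕ) (P : Fin ℓ → Set ℤ) : Set ℤ := ⋃ j, interleaveIndex ℓ j '' P j

theorem interleaveIndex_offset_mem (j : Fin ℓ) : 0 ≤ (ℓ - 1 - j : ℤ) ∧ (ℓ - 1 - j : ℤ) < ℓ := by
  have := j.isLt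
  omega

theorem interleaveIndex_eq_iff {j j' : Fin ℓ} {a a' : ℤ} :
    interleaveIndex ℓ j a = interleaveIndex ℓ j' a' ↔ j = j' ∧ a = a' := by
  rw [interleaveIndex, interleaveIndex,
    Int.mul_add_eq_mul_add_iff (interleaveIndex_offset_mem j) (interleaveIndex_offset_mem j'),
    Fin.ext_iff]
  omega

theorem le_interleaveIndex_iff {j : Fin ℓ} {m a : ℤ} :
    m * ℓ ≤ interleaveIndex ℓ j a ↔ m ≤ a := by
  have := interleaveIndex_offset_mem j
  rw [interleaveIndex]
  constructor
  · intro h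
    by_contra! ha
    nlinarith
  · intro h
    nlinarith

theorem exists_interleaveIndex_eq (hℓ : 0 < ℓ) (x : ℤ) :
    ∃ j : Fin ℓ, interleaveIndex ℓ j (x / ℓ) = x := by
  have hℓ' : (0 : ℤ) < ℓ := by exact_mod_cast hℓ
  have := Int.emod_nonneg x hℓ'.ne'
  have := Int.emod_lt_of_pos x hℓ'
  refine ⟨⟨(ℓ - 1 - x % ℓ).toNat, by omega⟩, ?_⟩
  rw [interleaveIndex]
  have hj : (((ℓ - 1 - x % ℓ).toNat : ℕ) : ℤ) = ℓ - 1 - x % ℓ := by omega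
  linarith [Int.mul_ediv_add_emod x ℓ]

theorem interleaveIndex_mem_interleave {P : Fin ℓ → Set ℤ} {j : Fin ℓ} {a : ℤ} :
    interleaveIndex ℓ j a ∈ interleave ℓ P ↔ a ∈ P j := by
  simp only [interleave, mem_iUnion, mem_image, interleaveIndex_eq_iff]
  constructor
  · rintro ⟨j', a', ha', rfl, rfl⟩
    exact ha'
  · exact fun ha => ⟨j, a, ha, rfl, rfl⟩

theorem upsilon_eq (e : ℕ) (j : Fin ℓ) (x : ℤ) :
    upsilon e ℓ (j.1 + 1) x = interleaveIndex ℓ j (x / e) * e + x % e := by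
  rw [upsilon, interleaveIndex]
  push_cast
  linear_combination -(ℓ : ℤ) * Int.mul_ediv_add_emod x e

theorem quotComp_uglovU {e : ℕ} (he : 0 < e) (B : Fin ℓ → Set ℤ) {c : ℕ} (hc : c < e) :
    quotComp e (uglovU e ℓ B) c = interleave ℓ fun j => quotComp e (B j) c := by
  have he' : (0 : ℤ) < e := by exact_mod_cast he
  have hc' : 0 ≤ (c : ℤ) ∧ (c : ℤ) < e := ⟨c.cast_nonneg, by exact_mod_cast hc⟩
  ext a
  simp only [quotComp, uglovU, interleave, mem_ofPred_eq, mem_iUnion, mem_image, upsilon_eq]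
  constructor
  · rintro ⟨j, x, hx, hxa⟩
    rw [Int.mul_add_eq_mul_add_iff ⟨Int.emod_nonneg x he'.ne', Int.emod_lt_of_pos x he'⟩ hc']
      at hxa
    refine ⟨j, x / e, ?_, hxa.1⟩
    rwa [← hxa.2, mul_comm, Int.mul_ediv_add_emod]
  · rintro ⟨j, b, hb, rfl⟩
    refine ⟨j, b * e + c, hb, ?_⟩
    obtain ⟨hdiv, hmod⟩ :=
      (Int.ediv_emod_unique (a := b * e + c) (q := b) (r := c) he').2 ⟨by ring, hc'⟩
    rw [hdiv, hmod]

theorem exists_forall_lt_mem_of_forall {P : Fin ℓ → Set ℤ} (hP : ∀ j, IsBetaSet (P j)) :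
    ∃ lo, ∀ j, ∀ x < lo, x ∈ P j := by
  choose lo hlo using fun j => (hP j).exists_forall_lt_mem
  obtain ⟨m, hm⟩ := Finite.exists_ge lo
  exact ⟨m, fun j x hx => hlo j x (lt_of_lt_of_le hx (hm j))⟩

theorem mem_interleave_of_lt (hℓ : 0 < ℓ) {P : Fin ℓ → Set ℤ} {lo : ℤ}
    (hlo : ∀ j, ∀ x < lo, x ∈ P j) {x : ℤ} (hx : x < lo * ℓ) : x ∈ interleave ℓ P := by
  obtain ⟨j, hj⟩ := exists_interleaveIndex_eq hℓ x
  rw [← hj] at hx ⊢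
  exact interleaveIndex_mem_interleave.2
    (hlo j _ (not_le.1 (mt le_interleaveIndex_iff.2 hx.not_ge)))

theorem isBetaSet_interleave (hℓ : 0 < ℓ) {P : Fin ℓ → Set ℤ} (hP : ∀ j, IsBetaSet (P j)) :
    IsBetaSet (interleave ℓ P) := by
  obtain ⟨lo, hlo⟩ := exists_forall_lt_mem_of_forall hP
  choose hi hhi using fun j => (hP j).exists_forall_mem_lt
  obtain ⟨M, hM⟩ := Finite.exists_le hi
  refine IsBetaSet.iff_bounds.2 ⟨⟨lo * ℓ, fun x => mem_interleave_of_lt hℓ hlo⟩,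
    ⟨M * ℓ, fun x hx => ?_⟩⟩
  obtain ⟨j, a, ha, rfl⟩ := mem_iUnion.1 hx
  exact not_le.1 (mt le_interleaveIndex_iff.1 (not_le.2 (lt_of_lt_of_le (hhi j a ha) (hM j))))

theorem charge_interleave (hℓ : 0 < ℓ) {P : Fin ℓ → Set ℤ} (hP : ∀ j, IsBetaSet (P j)) :
    charge (interleave ℓ P) = ∑ j, charge (P j) := by
  obtain ⟨lo, hlo⟩ := exists_forall_lt_mem_of_forall hP
  have hbeads : interleave ℓ P ∩ Ici (lo * ℓ) = ⋃ j, interleaveIndex ℓ j '' (P j ∩ Ici lo) := by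
    ext x
    simp only [interleave, mem_inter_iff, mem_iUnion, mem_image, mem_Ici]
    constructor
    · rintro ⟨⟨j, a, ha, rfl⟩, hx⟩
      exact ⟨j, a, ⟨ha, le_interleaveIndex_iff.1 hx⟩, rfl⟩
    · rintro ⟨j, a, ⟨ha, hla⟩, rfl⟩
      exact ⟨⟨j, a, ha, rfl⟩, le_interleaveIndex_iff.2 hla⟩
  have hcard : (interleave ℓ P ∩ Ici (lo * ℓ)).ncard = ∑ j, (P j ∩ Ici lo).ncard := by
    rw [hbeads, ncard_iUnion_of_finite (fun j => ((hP j).finite_inter_Ici lo).image _),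
      finsum_eq_sum_of_fintype]
    · exact Finset.sum_congr rfl fun j _ =>
        ncard_image_of_injective _ fun a a' h => (interleaveIndex_eq_iff.1 h).2
    · intro j j' hjj'
      refine disjoint_left.2 ?_
      rintro _ ⟨a, -, rfl⟩ ⟨a', -, h⟩
      exact hjj' (interleaveIndex_eq_iff.1 h).1.symm
  rw [(isBetaSet_interleave hℓ hP).charge_eq_of_forall_lt_mem fun x => mem_interleave_of_lt hℓ hlo,
    hcard, Finset.sum_congr rfl fun j _ => (hP j).charge_eq_of_forall_lt_mem (hlo j)]
  push_cast
  rw [Finset.sum_add_distrib, Finset.sum_const, Finset.card_univ, Fintype.card_fin, nsmul_eq_mul]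
  ring

end Interleave

section Weight

variable {e ℓ : ℕ}

theorem ncard_inversions_add_le_wtSet (U : Set ℤ) {c c' : ℕ} (hc : c < e) (hc' : c' < e)
    (hne : c ≠ c') :
    (inversions (quotComp e U c)).ncard + (inversions (quotComp e U c')).ncard ≤ wtSet e U := by
  rw [← Finset.sum_pair (f := fun c => (inversions (quotComp e U c)).ncard) hne]
  exact Finset.sum_le_sum_of_subset (by simp [Finset.insert_subset_iff, hc, hc'])

theorem sum_deltaOf_eq [NeZero e] (hℓ : 0 < ℓ) {B : Fin ℓ → Set ℤ} (hB : ∀ j, IsBetaSet (B j))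
    {i : ZMod e} {k : ℤ} (hk : ((i - 1).val : ℤ) + 1 = i.val + k * e) :
    ∑ j, deltaOf e i (B j) = charge (quotComp e (uglovU e ℓ B) i.val)
      - charge (quotComp e (uglovU e ℓ B) (i - 1).val) - ℓ * k := by
  have he : 0 < e := Nat.pos_of_neZero e
  rw [quotComp_uglovU he B (ZMod.val_lt _), quotComp_uglovU he B (ZMod.val_lt _),
    charge_interleave hℓ fun j => isBetaSet_quotComp (hB j) he _,
    charge_interleave hℓ fun j => isBetaSet_quotComp (hB j) he _]
  simp only [(hB _).deltaOf_eq hk, Finset.sum_sub_distrib, Finset.sum_const, Finset.card_univ,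
    Fintype.card_fin, nsmul_eq_mul]

theorem sum_deltaOf_add_one_le_wtSet_uglovU (he : 2 ≤ e) (hℓ : 0 < ℓ) {B : Fin ℓ → Set ℤ}
    (hB : ∀ j, IsBetaSet (B j)) {i : ZMod e} {j : Fin ℓ} {y : ℤ} (hy : y ∈ B j)
    (hy1 : y + 1 ∉ B j) (hres : ((y + 1 : ℤ) : ZMod e) = i) :
    ∑ j, deltaOf e i (B j) + 1 ≤ wtSet e (uglovU e ℓ B) := by
  have : Fact (1 < e) := ⟨by omega⟩
  have he0 : 0 < e := by omega
  obtain ⟨k, hk⟩ := exists_val_sub_one_add_one i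
  set U := uglovU e ℓ B
  have hC (c : ℕ) (hc : c < e) : IsBetaSet (quotComp e U c) := by
    rw [quotComp_uglovU he0 B hc]
    exact isBetaSet_interleave hℓ fun j => isBetaSet_quotComp (hB j) he0 c
  have hy_eq : y = y / e * e + (i - 1).val :=
    eq_ediv_mul_add_val (eq_sub_of_add_eq (by push_cast at hres; exact hres))
  have hy1_eq : y + 1 = (y + 1) / e * e + i.val := eq_ediv_mul_add_val hres
  have hba : (y + 1) / e = y / e + k :=
    mul_right_cancel₀ (by positivity : (e : ℤ) ≠ 0) (by linear_combination hy_eq - hy1_eq + hk)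
  have hbead : interleaveIndex ℓ j (y / e) ∈ quotComp e U (i - 1).val := by
    rw [quotComp_uglovU he0 B (ZMod.val_lt _), interleaveIndex_mem_interleave]
    rwa [quotComp, mem_ofPred_eq, ← hy_eq]
  have hgap : interleaveIndex ℓ j ((y + 1) / e) ∉ quotComp e U i.val := by
    rw [quotComp_uglovU he0 B (ZMod.val_lt _), interleaveIndex_mem_interleave]
    rwa [quotComp, mem_ofPred_eq, ← hy1_eq]
  have hne : i.val ≠ (i - 1).val := fun h => by
    simpa using congrArg (i - ·) (ZMod.val_injective e h)
  have hwt := ncard_inversions_add_le_wtSet U (ZMod.val_lt i) (ZMod.val_lt (i - 1)) hne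
  have h1 := (hC _ (ZMod.val_lt i)).charge_sub_le_ncard_inversions hgap
  have h2 := (hC _ (ZMod.val_lt (i - 1))).sub_charge_lt_ncard_inversions hbead
  rw [sum_deltaOf_eq hℓ hB hk]
  simp only [interleaveIndex, hba] at h1 h2
  linarith

end Weight

theorem deltaMulti_add_one_le_wtPart {e ℓ : ℕ} (he : 2 ≤ e) (hℓ : 1 ≤ ℓ) {Λ : Fin ℓ → ℕ → ℕ}
    (hΛ : ∀ j, IsPartitionFun (Λ j)) {t : Fin ℓ → ℤ} {i : ZMod e} {j : Fin ℓ} {y : ℤ}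
    (hy : y ∈ betaOf (Λ j) (t j)) (hy1 : y + 1 ∉ betaOf (Λ j) (t j))
    (hres : ((y + 1 : ℤ) : ZMod e) = i) :
    deltaMulti e ℓ Λ t i + 1 ≤ wtPart e ℓ Λ t :=
  sum_deltaOf_add_one_le_wtSet_uglovU he hℓ (fun j => isBetaSet_betaOf (hΛ j) (t j)) hy hy1 hres

theorem deltaOf_shiftSet {e : ℕ} (i : ZMod e) (B : Set ℤ) {k : ℤ} (hk : (k : ZMod e) = 0) :
    deltaOf e i (shiftSet B k) = deltaOf e i B := by
  have key : ∀ (d : ZMod e) (s : ℤ),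
      {x : ℤ | x ∈ shiftSet B k ∧ (x : ZMod e) = d ∧ x + s ∉ shiftSet B k}.ncard
        = {x : ℤ | x ∈ B ∧ (x : ZMod e) = d ∧ x + s ∉ B}.ncard := by
    intro d s
    rw [← ncard_shiftSet {x : ℤ | x ∈ B ∧ (x : ZMod e) = d ∧ x + s ∉ B} k]
    congr 1
    ext x
    simp only [mem_shiftSet, mem_ofPred_eq]
    rw [Int.cast_sub, hk, sub_zero, sub_add_eq_add_sub]
  simp only [deltaOf, sub_eq_add_neg, key]

theorem deltaMulti_orbit (e ℓ : ℕ) (Λ : Fin ℓ → ℕ → ℕ) (r : Fin ℓ → ℤ) (i : ZMod e)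
    (σ : Equiv.Perm (Fin ℓ)) (v : Fin ℓ → ℤ) :
    deltaMulti e ℓ (fun j => Λ (σ j)) (fun j => r (σ j) + e * v j) i = deltaMulti e ℓ Λ r i := by
  simp only [deltaMulti, betaOf_add, deltaOf_shiftSet i _ (by simp : ((e * _ : ℤ) : ZMod e) = 0)]
  exact Equiv.sum_comp σ fun j => deltaOf e i (betaOf (Λ j) (r j))

theorem mem_youngSet {ℓ : ℕ} {Λ : Fin ℓ → ℕ → ℕ} {a b : ℕ} {j : Fin ℓ} :
    (a, b, j) ∈ youngSet ℓ Λ ↔ 1 ≤ a ∧ 1 ≤ b ∧ b ≤ Λ j (a - 1) :=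
  Iff.rfl

theorem addable_node_spec {ℓ : ℕ} {Λ M : Fin ℓ → ℕ → ℕ} (hM : ∀ j, IsPartitionFun (M j))
    {a b : ℕ} {j : Fin ℓ} (hx : (a, b, j) ∉ youngSet ℓ Λ)
    (hY : youngSet ℓ M = youngSet ℓ Λ ∪ {(a, b, j)}) :
    1 ≤ a ∧ Λ j (a - 1) + 1 = b ∧ (2 ≤ a → b ≤ Λ j (a - 2)) := by
  have hmem (a' b' : ℕ) : (a', b', j) ∈ youngSet ℓ M ↔
      (a', b', j) ∈ youngSet ℓ Λ ∨ (a' = a ∧ b' = b) := by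
    simp [hY, or_comm]
  obtain ⟨ha, hb, hbM⟩ := mem_youngSet.1 ((hmem a b).2 (Or.inr ⟨rfl, rfl⟩))
  rw [mem_youngSet] at hx
  refine ⟨ha, ?_, fun ha2 => ?_⟩
  · rcases Nat.lt_or_ge b 2 with hb2 | hb2
    · omega
    · have := (hmem a (b - 1)).1 (mem_youngSet.2 ⟨ha, by omega, by omega⟩)
      rw [mem_youngSet] at this
      omega
  · have hrow : a - 1 - 1 = a - 2 := by omega
    have := (hM j).1 (a - 2) (a - 1) (by omega)
    have := (hmem (a - 1) b).1 (mem_youngSet.2 ⟨by omega, hb, by rw [hrow]; omega⟩)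
    rw [mem_youngSet, hrow] at this
    omega

/-- if the minimal e-weight over the Ŵ_ℓ-orbit of (λ; r) is at most δ_i^r(λ),
then λ has no addable i-node relative to r. -/
theorem stmt19 (e ℓ : ℕ) (he : 2 ≤ e) (hl : 1 ≤ ℓ) (Λ : Fin ℓ → ℕ → ℕ)
    (hΛ : ∀ j, IsPartitionFun (Λ j)) (r : Fin ℓ → ℤ) (i : ZMod e)
    (h : ((sInf (orbitWeights e ℓ Λ r) : ℕ) : ℤ) ≤ deltaMulti e ℓ Λ r i) :
    ¬ ∃ x : ℕ × ℕ × Fin ℓ, x ∉ youngSet ℓ Λ ∧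
      (∃ M : Fin ℓ → ℕ → ℕ, (∀ j, IsPartitionFun (M j)) ∧
        youngSet ℓ M = youngSet ℓ Λ ∪ {x}) ∧
      (((x.2.1 : ℤ) - (x.1 : ℤ) + r x.2.2 : ℤ) : ZMod e) = i := by
  rintro ⟨⟨a, b, j⟩, hx, ⟨M, hM, hY⟩, hres⟩
  obtain ⟨ha, hrow, hprev⟩ := addable_node_spec hM hx hY
  set y : ℤ := Λ j (a - 1) + r j - ((a - 1 : ℕ) + 1)
  have hy : y ∈ betaOf (Λ j) (r j) := ⟨a - 1, rfl⟩
  have hy1 : y + 1 ∉ betaOf (Λ j) (r j) :=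
    add_one_notMem_betaOf (hΛ j) (fun _ => by rw [show a - 1 - 1 = a - 2 by omega] at *; omega) _
  have hyb : y + 1 = (b : ℤ) - a + r j := by omega
  obtain ⟨σ, v, hmin⟩ := Nat.sInf_mem (⟨_, 1, 0, rfl⟩ : (orbitWeights e ℓ Λ r).Nonempty)
  -- in the minimising orbit element the bead `y` sits in component `σ⁻¹ j`, shifted by `e * v`
  have key := deltaMulti_add_one_le_wtPart he hl (fun j => hΛ (σ j)) (j := σ.symm j)
    (t := fun j => r (σ j) + e * v j) (i := i) (y := y + e * v (σ.symm j))
    (by simpa [betaOf_add, mem_shiftSet] using hy)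
    (by simpa [betaOf_add, mem_shiftSet, add_right_comm _ (e * _ : ℤ)] using hy1)
    (by rw [← hres, add_right_comm, hyb]; simp)
  rw [deltaMulti_orbit, ← hmin] at key
  omega
end
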